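/- If g is a scalar modular form of weight w ≥ 1 for Γ, then its Cohen–Kuznetsov lifting g̃(z,X) = Σ_{j=0}^{∞} g^{(j)}(z) X^j / (j! (j+w−1)!) is a Jacobi-like form of weight w: for all γ ∈ Γ, g̃(γz, 𝔍(γ,z)^{−2}X) = 𝔍(γ,z)^{w} e^{𝔎(γ,z)X} g̃(z,X). -/

import Mathlib

open Matrix Complex Finset

abbrev SL2R := Matrix.SpecialLinearGroup (Fin 2) ℝ

noncomputable def Jf (γ : SL2R) (z : ℂ) : ℂ := (γ.1 1 0 : ℝ) * z + (γ.1 1 1 : ℝ)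

noncomputable def Kf (γ : SL2R) (z : ℂ) : ℂ := (γ.1 1 0 : ℝ) / Jf γ z

noncomputable def actSL (γ : SL2R) (z : ℂ) : ℂ :=
  ((γ.1 0 0 : ℝ) * z + (γ.1 0 1 : ℝ)) / Jf γ z

/-- Scalar modular form of weight k for Γ. -/
def IsMF (Γ : Subgroup SL2R) (k : ℤ) (f : ℂ → ℂ) : Prop :=
  DifferentiableOn ℂ f {z : ℂ | 0 < z.im} ∧
    ∀ γ ∈ Γ, ∀ z : ℂ, 0 < z.im → f (actSL γ z) = Jf γ z ^ k * f z


/-! Write `G j = g⁽ʲ⁾ / (j! (j+w-1)!)`, so that `G j' = (j+1)(j+w) G (j+1)`, and let `B m` be the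
coefficient of `X^m` in `e^{𝔎X} g̃(z, X)`. Since `(γz)' = 𝔍⁻²`, `𝔍' = 𝔎𝔍` and `𝔎' = -𝔎²`,
differentiating `G m (γz) = 𝔍^{2m+w} B m` yields the same identity for `m + 1`, provided
`B m' + (2m+w) 𝔎 B m = (m+1)(m+w) B (m+1)`. Coefficientwise this last identity is
`i (m+j+w) + j (j-1+w) = (m+1)(m+w)` for `i + j = m + 1`. -/

open UpperHalfPlane

open scoped Nat

section Moebius

variable (γ : SL2R)

lemma actSL_eq_coe_smul {z : ℂ} (hz : 0 < z.im) : actSL γ z = ↑(γ • (⟨z, hz⟩ : ℍ)) := by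
  simp [coe_specialLinearGroup_apply, actSL, Jf]

lemma Jf_eq_denom (z : ℂ) : Jf γ z = denom (SpecialLinearGroup.mapGL ℝ γ) z := by
  simp [Jf, denom]

lemma Jf_ne_zero {z : ℂ} (hz : 0 < z.im) : Jf γ z ≠ 0 :=
  Jf_eq_denom γ z ▸ denom_ne_zero_of_im _ hz.ne'

lemma im_actSL_pos {z : ℂ} (hz : 0 < z.im) : 0 < (actSL γ z).im :=
  actSL_eq_coe_smul γ hz ▸ (γ • (⟨z, hz⟩ : ℍ)).im_pos

lemma hasDerivAt_Jf (z : ℂ) : HasDerivAt (Jf γ) (γ 1 0 : ℂ) z := by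
  show HasDerivAt (fun z : ℂ ↦ (γ 1 0 : ℂ) * z + γ 1 1) _ z
  simpa using ((hasDerivAt_id z).const_mul (γ 1 0 : ℂ)).add_const (γ 1 1 : ℂ)

lemma Kf_mul_Jf {z : ℂ} (hJ : Jf γ z ≠ 0) : Kf γ z * Jf γ z = γ 1 0 := by
  rw [Kf, div_mul_cancel₀ _ hJ]

lemma hasDerivAt_Jf_pow {z : ℂ} (hJ : Jf γ z ≠ 0) (n : ℕ) :
    HasDerivAt (fun z ↦ Jf γ z ^ n) (n * Kf γ z * Jf γ z ^ n) z := by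
  refine ((hasDerivAt_Jf γ z).pow n).congr_deriv ?_
  rcases n with _ | n
  · simp
  · rw [← Kf_mul_Jf γ hJ]
    push_cast
    ring

lemma hasDerivAt_Kf {z : ℂ} (hJ : Jf γ z ≠ 0) : HasDerivAt (Kf γ) (-Kf γ z ^ 2) z := by
  refine ((hasDerivAt_const z (γ 1 0 : ℂ)).div (hasDerivAt_Jf γ z) hJ).congr_deriv ?_
  rw [Kf]
  ring

lemma hasDerivAt_actSL {z : ℂ} (hJ : Jf γ z ≠ 0) : HasDerivAt (actSL γ) (Jf γ z ^ 2)⁻¹ z := by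
  have hnum : HasDerivAt (fun z : ℂ ↦ (γ 0 0 : ℂ) * z + γ 0 1) (γ 0 0 : ℂ) z := by
    simpa using ((hasDerivAt_id z).const_mul (γ 0 0 : ℂ)).add_const (γ 0 1 : ℂ)
  have hdet : (γ 0 0 : ℂ) * γ 1 1 - γ 0 1 * γ 1 0 = 1 := by
    exact_mod_cast (Matrix.det_fin_two γ.1).symm.trans γ.2
  refine (hnum.div (hasDerivAt_Jf γ z) hJ).congr_deriv ?_
  rw [Jf, inv_eq_one_div, ← hdet]
  ring

end Moebius

section CoefficientRecursion

variable {R : Type*} [CommRing R]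

lemma mul_sum_antidiagonal_succ (a b : ℕ → R) (w : R) (m : ℕ) :
    (m + 1) * (m + w) * ∑ q ∈ antidiagonal (m + 1), a q.1 * b q.2 =
      ∑ p ∈ antidiagonal m, (p.1 + 1) * (m + p.2 + w) * (a (p.1 + 1) * b p.2) +
        ∑ p ∈ antidiagonal m, (p.2 + 1) * (p.2 + w) * (a p.1 * b (p.2 + 1)) := by
  have hsplit : ∀ q ∈ antidiagonal (m + 1), (m + 1) * (m + w) * (a q.1 * b q.2) =
      q.1 * (m + q.2 + w) * (a q.1 * b q.2) + q.2 * (q.2 - 1 + w) * (a q.1 * b q.2) := by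
    intro q hq
    have hm : ((m + 1 : ℕ) : R) = ((q.1 + q.2 : ℕ) : R) := by rw [mem_antidiagonal.mp hq]
    push_cast at hm
    linear_combination (m + q.2 + w) * (a q.1 * b q.2) * hm
  rw [mul_sum, sum_congr rfl hsplit, sum_add_distrib, Nat.sum_antidiagonal_succ,
    Nat.sum_antidiagonal_succ' (f := fun q ↦ (q.2 : R) * (q.2 - 1 + w) * (a q.1 * b q.2))]
  simp only [Nat.cast_zero, zero_mul, zero_add, Nat.cast_add, Nat.cast_one, add_sub_cancel_right]

end CoefficientRecursion

/-- The coefficient of `X^m` in `e^{K X} · ∑ G j X^j`. -/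
noncomputable def expMulCoeff (K : ℂ → ℂ) (G : ℕ → ℂ → ℂ) (m : ℕ) (z : ℂ) : ℂ :=
  ∑ p ∈ antidiagonal m, K z ^ p.1 / p.1 ! * G p.2 z

lemma expMulCoeff_eq_sum_range (K : ℂ → ℂ) (G : ℕ → ℂ → ℂ) (m : ℕ) (z : ℂ) :
    expMulCoeff K G m z = ∑ j ∈ range (m + 1), K z ^ (m - j) / (m - j)! * G j z := by
  rw [expMulCoeff, ← Nat.sum_antidiagonal_swap,
    Nat.sum_antidiagonal_eq_sum_range_succ_mk]
  rfl

lemma hasDerivAt_pow_div_factorial {K : ℂ → ℂ} {z : ℂ} (hK : HasDerivAt K (-K z ^ 2) z)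
    (n : ℕ) : HasDerivAt (fun z ↦ K z ^ n / n !) (-n * K z * (K z ^ n / n !)) z := by
  refine ((hK.pow n).div_const _).congr_deriv ?_
  rcases n with _ | n
  · simp
  · simp only [Nat.add_sub_cancel]
    ring

lemma mul_pow_div_factorial (K : ℂ) (n : ℕ) :
    K * (K ^ n / n !) = (n + 1) * (K ^ (n + 1) / (n + 1)!) := by
  rw [Nat.factorial_succ]
  push_cast
  field_simp
  ring

lemma hasDerivAt_expMulCoeff {K : ℂ → ℂ} {G : ℕ → ℂ → ℂ} {w z : ℂ}
    (hK : HasDerivAt K (-K z ^ 2) z)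
    (hG : ∀ j, HasDerivAt (G j) ((j + 1) * (j + w) * G (j + 1) z) z) (m : ℕ) :
    HasDerivAt (expMulCoeff K G m)
      ((m + 1) * (m + w) * expMulCoeff K G (m + 1) z - (2 * m + w) * K z * expMulCoeff K G m z)
      z := by
  refine (HasDerivAt.fun_sum fun p _ ↦
    (hasDerivAt_pow_div_factorial hK p.1).mul (hG p.2)).congr_deriv ?_
  rw [eq_sub_iff_add_eq, expMulCoeff, expMulCoeff,
    mul_sum_antidiagonal_succ (fun i ↦ K z ^ i / i !) (fun j ↦ G j z), mul_sum,
    ← sum_add_distrib, ← sum_add_distrib]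
  refine sum_congr rfl fun p hp ↦ ?_
  have hm : (m : ℂ) = p.1 + p.2 := by exact_mod_cast (mem_antidiagonal.mp hp).symm
  linear_combination (2 * m + w - p.1) * G p.2 z * mul_pow_div_factorial (K z) p.1 +
    (p.1 + 1) * (K z ^ (p.1 + 1) / (p.1 + 1)!) * G p.2 z * hm

/-- The coefficient of `X^j` in the Cohen–Kuznetsov lift `g̃(z, X)`. -/
noncomputable def cohenKuznetsovCoeff (w : ℕ) (g : ℂ → ℂ) (j : ℕ) (z : ℂ) : ℂ :=
  iteratedDeriv j g z / (j ! * (j + w - 1)!)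

lemma hasDerivAt_cohenKuznetsovCoeff {w : ℕ} (hw : 1 ≤ w) {g : ℂ → ℂ} {j : ℕ} {z : ℂ}
    (hg : DifferentiableAt ℂ (iteratedDeriv j g) z) :
    HasDerivAt (cohenKuznetsovCoeff w g j)
      ((j + 1) * (j + w) * cohenKuznetsovCoeff w g (j + 1) z) z := by
  obtain ⟨v, rfl⟩ : ∃ v, w = v + 1 := ⟨w - 1, by omega⟩
  refine (iteratedDeriv_succ (f := g) ▸ hg.hasDerivAt).div_const _ |>.congr_deriv ?_
  unfold cohenKuznetsovCoeff
  rw [show j + 1 + (v + 1) - 1 = j + v + 1 by omega,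
    show j + (v + 1) - 1 = j + v by omega, Nat.factorial_succ j, Nat.factorial_succ (j + v)]
  have hjv : (j : ℂ) + v + 1 ≠ 0 := by exact_mod_cast (j + v).succ_ne_zero
  push_cast
  field_simp
  ring

lemma differentiableAt_iteratedDeriv {g : ℂ → ℂ} {U : Set ℂ} (hg : DifferentiableOn ℂ g U)
    (hU : IsOpen U) (j : ℕ) {z : ℂ} (hz : z ∈ U) : DifferentiableAt ℂ (iteratedDeriv j g) z := by
  rw [iteratedDeriv_eq_iterate]
  exact ((hg.analyticOnNhd hU).iterated_deriv j z hz).differentiableAt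

theorem cohenKuznetsovCoeff_actSL {w : ℕ} (hw : 1 ≤ w) {g : ℂ → ℂ}
    (hg : DifferentiableOn ℂ g upperHalfPlaneSet) {γ : SL2R}
    (hmod : ∀ z : ℂ, 0 < z.im → g (actSL γ z) = Jf γ z ^ w * g z) (m : ℕ) {z : ℂ}
    (hz : 0 < z.im) :
    cohenKuznetsovCoeff w g m (actSL γ z) =
      Jf γ z ^ (2 * m + w) * expMulCoeff (Kf γ) (cohenKuznetsovCoeff w g) m z := by
  induction m generalizing z with
  | zero => simp [cohenKuznetsovCoeff, expMulCoeff, hmod z hz, mul_div_assoc]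
  | succ m ih =>
    have hJ := Jf_ne_zero γ hz
    have hG : ∀ j {z : ℂ}, 0 < z.im →
        HasDerivAt (cohenKuznetsovCoeff w g j)
          ((j + 1) * (j + (w : ℂ)) * cohenKuznetsovCoeff w g (j + 1) z) z :=
      fun j z hz ↦ hasDerivAt_cohenKuznetsovCoeff hw
        (differentiableAt_iteratedDeriv hg isOpen_upperHalfPlaneSet j hz)
    have hlhs := (hG m (im_actSL_pos γ hz)).comp z (hasDerivAt_actSL γ hJ)
    have hrhs := ((hasDerivAt_Jf_pow γ hJ (2 * m + w)).mul
      (hasDerivAt_expMulCoeff (hasDerivAt_Kf γ hJ) (fun j ↦ hG j hz) m)).congr_of_eventuallyEq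
      (Filter.eventually_of_mem (isOpen_upperHalfPlaneSet.mem_nhds hz) fun z hz ↦ ih hz)
    have hcoeff : ((m : ℂ) + 1) * (m + w) ≠ 0 := by
      exact_mod_cast Nat.mul_ne_zero m.succ_ne_zero (by omega : m + w ≠ 0)
    have hderiv := hlhs.unique hrhs
    push_cast at hderiv
    rw [show 2 * (m + 1) + w = 2 * m + w + 2 by ring, pow_add]
    field_simp at hderiv
    apply mul_left_cancel₀ hcoeff
    linear_combination hderiv

/-- If g is a modular form of weight w ≥ 1 for Γ, its Cohen–Kuznetsov lifting
g̃(z,X) = Σ_j g⁽ʲ⁾(z) X^j/(j!(j+w−1)!) satisfies the Jacobi-like form identity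
g̃(γz, 𝔍^{−2}X) = 𝔍^w e^{𝔎X} g̃(z,X), understood coefficientwise in X: for
each m, 𝔍^{−2m} g⁽ᵐ⁾(γz)/(m!(m+w−1)!) =
𝔍^w Σ_{j=0}^{m} 𝔎^{m−j}/(m−j)! · g⁽ʲ⁾(z)/(j!(j+w−1)!). -/
theorem cohen_kuznetsov_jacobi_like (Γ : Subgroup SL2R) (w : ℕ) (hw : 1 ≤ w)
    (g : ℂ → ℂ) (hg : IsMF Γ (w : ℤ) g) :
    ∀ γ ∈ Γ, ∀ z : ℂ, 0 < z.im → ∀ m : ℕ,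
      Jf γ z ^ (-(2 * m : ℤ)) * (iteratedDeriv m g (actSL γ z) /
          ((m.factorial : ℂ) * ((m + w - 1).factorial : ℂ))) =
        Jf γ z ^ (w : ℤ) * ∑ j ∈ Finset.range (m + 1),
          Kf γ z ^ (m - j) / ((m - j).factorial : ℂ) *
            (iteratedDeriv j g z / ((j.factorial : ℂ) * ((j + w - 1).factorial : ℂ))) := by
  intro γ hγ z hz m
  have hmod : ∀ z : ℂ, 0 < z.im → g (actSL γ z) = Jf γ z ^ w * g z := fun z hz ↦ by
    simpa only [zpow_natCast] using hg.2 γ hγ z hz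
  calc Jf γ z ^ (-(2 * m : ℤ)) * cohenKuznetsovCoeff w g m (actSL γ z)
      = Jf γ z ^ (-(2 * m : ℤ)) * Jf γ z ^ ((2 * m + w : ℕ) : ℤ) *
          expMulCoeff (Kf γ) (cohenKuznetsovCoeff w g) m z := by
        rw [cohenKuznetsovCoeff_actSL hw hg.1 hmod m hz, zpow_natCast, mul_assoc]
    _ = _ := by
        rw [← zpow_add₀ (Jf_ne_zero γ hz), expMulCoeff_eq_sum_range,
          show -(2 * m : ℤ) + ((2 * m + w : ℕ) : ℤ) = w by push_cast; ring]
        rfl
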